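/- If K_n is the complete graph on n ≥ 2 vertices, then the geodetic hull number of the complementary prism K_n\bar{K}_n satisfies h(K_n\bar{K}_n) = n. -/

import Mathlib

/-!
The vertices `inr u` of `KₙK̄ₙ` are pendant, attached to `inl u`. A pendant (more generally,
simplicial) vertex of a connected graph is extreme, i.e. its complement is convex, so it lies in
every hull set. Conversely `inl u` lies on the geodesic `inr u, inl u, inl v, inr v`, so the `n`
pendant vertices already form a hull set once `n ≥ 2`.
-/

open SimpleGraph

/-- The geodetic closed interval `I[u,v]`: `u`, `v`, and all vertices lying on
some shortest `u`–`v` path. -/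
def geoInterval {V : Type*} (G : SimpleGraph V) (u v : V) : Set V :=
  {w | w = u ∨ w = v ∨ (G.Reachable u v ∧ G.dist u w + G.dist w v = G.dist u v)}

/-- A set is geodetically convex if it is closed under intervals. -/
def IsGeoConvex {V : Type*} (G : SimpleGraph V) (S : Set V) : Prop :=
  ∀ u ∈ S, ∀ v ∈ S, geoInterval G u v ⊆ S

/-- The geodetic convex hull: the smallest convex set containing `S`. -/
def geoHull {V : Type*} (G : SimpleGraph V) (S : Set V) : Set V :=
  ⋂₀ {T | IsGeoConvex G T ∧ S ⊆ T}

/-- `S` is a hull set if its convex hull is the whole vertex set. -/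
def IsHullSet {V : Type*} (G : SimpleGraph V) (S : Set V) : Prop :=
  geoHull G S = Set.univ

/-- The geodetic hull number: minimum cardinality of a hull set. -/
noncomputable def hullNumber {V : Type*} (G : SimpleGraph V) : ℕ :=
  sInf {n | ∃ S : Set V, S.ncard = n ∧ IsHullSet G S}

/-- A vertex is simplicial if its closed neighborhood induces a clique. -/
def IsSimplicial {V : Type*} (G : SimpleGraph V) (v : V) : Prop :=
  ∀ a ∈ G.neighborSet v, ∀ b ∈ G.neighborSet v, a ≠ b → G.Adj a b

/-- The complementary prism `G G̅`: disjoint union of `G` (left copies) and its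
complement (right copies), plus a perfect matching between corresponding vertices. -/
def compPrism {V : Type*} (G : SimpleGraph V) : SimpleGraph (V ⊕ V) where
  Adj x y :=
    match x, y with
    | .inl u, .inl w => G.Adj u w
    | .inr u, .inr w => u ≠ w ∧ ¬ G.Adj u w
    | .inl u, .inr w => u = w
    | .inr u, .inl w => u = w
  symm := by
    constructor
    rintro (u | u) (w | w) h
    · exact h.symm
    · exact h.symm
    · exact h.symm
    · exact ⟨h.1.symm, fun a => h.2 a.symm⟩
  loopless := by
    constructor
    rintro (u | u) h
    · exact G.ne_of_adj h rfl
    · exact h.1 rfl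

namespace SimpleGraph

variable {V : Type*} {G : SimpleGraph V}

section Geodetic

lemma isGeoConvex_geoHull (S : Set V) : IsGeoConvex G (geoHull G S) :=
  fun _ hu _ hv _ hw _ hT => hT.1 _ (hu _ hT) _ (hv _ hT) hw

lemma subset_geoHull (S : Set V) : S ⊆ geoHull G S :=
  fun _ hx _ hT => hT.2 hx

lemma geoHull_subset {S T : Set V} (hT : IsGeoConvex G T) (hST : S ⊆ T) : geoHull G S ⊆ T :=
  Set.sInter_subset_of_mem ⟨hT, hST⟩

lemma Reachable.exists_adj_dist_add_one_eq {u v : V} (h : G.Reachable u v) (hne : u ≠ v) :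
    ∃ w, G.Adj u w ∧ G.dist w v + 1 = G.dist u v := by
  obtain ⟨p, hp⟩ := h.exists_walk_length_eq_dist
  have hnil : ¬p.Nil := fun hn => hne hn.eq
  have hadj := p.adj_snd hnil
  refine ⟨p.snd, hadj, le_antisymm ?_ ?_⟩
  · have := dist_le p.tail
    have := p.length_tail_add_one hnil
    omega
  · have := hadj.reachable.dist_triangle_left v
    rw [dist_eq_one_iff_adj.mpr hadj] at this
    omega

lemma dist_eq_dist_add_one_of_neighborSet_eq_singleton {x y z : V}
    (hx : G.neighborSet x = {y}) (hxz : G.Reachable x z) (hzx : z ≠ x) :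
    G.dist x z = G.dist y z + 1 := by
  obtain ⟨w, hw, hd⟩ := hxz.exists_adj_dist_add_one_eq hzx.symm
  obtain rfl : w = y := by simpa [hx] using (G.mem_neighborSet x w).mpr hw
  exact hd.symm

lemma mem_geoInterval_of_neighborSet_eq_singleton {x y z : V}
    (hx : G.neighborSet x = {y}) (hxz : G.Reachable x z) (hzx : z ≠ x) :
    y ∈ geoInterval G x z := by
  have hxy : G.Adj x y := by simp [← mem_neighborSet, hx]
  refine Or.inr (Or.inr ⟨hxz, ?_⟩)
  rw [dist_eq_dist_add_one_of_neighborSet_eq_singleton hx hxz hzx,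
    dist_eq_one_iff_adj.mpr hxy, add_comm]

lemma isSimplicial_of_neighborSet_eq_singleton {x y : V} (hx : G.neighborSet x = {y}) :
    IsSimplicial G x := by
  intro a ha b hb hab
  rw [hx] at ha hb
  exact absurd (ha.trans hb.symm) hab

lemma IsSimplicial.dist_le_one {v a b : V} (hv : IsSimplicial G v) (ha : G.Adj v a)
    (hb : G.Adj v b) : G.dist a b ≤ 1 := by
  rcases eq_or_ne a b with rfl | hab
  · simp
  · exact (dist_eq_one_iff_adj.mpr (hv a ha b hb hab)).le

/-- The two neighbours of `v` on a geodesic through `v` would be adjacent or equal, giving a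
shortcut. -/
lemma IsSimplicial.isGeoConvex_compl (hG : G.Preconnected) {v : V} (hv : IsSimplicial G v) :
    IsGeoConvex G {v}ᶜ := by
  intro a ha b hb w hw hwv
  simp only [Set.mem_compl_iff, Set.mem_singleton_iff] at ha hb hwv
  subst hwv
  rcases hw with rfl | rfl | ⟨-, hd⟩
  · exact ha rfl
  · exact hb rfl
  obtain ⟨a', hva', hda⟩ := (hG w a).exists_adj_dist_add_one_eq (Ne.symm ha)
  obtain ⟨b', hvb', hdb⟩ := (hG w b).exists_adj_dist_add_one_eq (Ne.symm hb)
  have hshort : G.dist a b ≤ G.dist a a' + G.dist a' b' + G.dist b' b :=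
    calc G.dist a b ≤ G.dist a a' + G.dist a' b := (hG a a').dist_triangle_left b
      _ ≤ G.dist a a' + (G.dist a' b' + G.dist b' b) :=
        Nat.add_le_add_left ((hG a' b').dist_triangle_left b) _
      _ = _ := (add_assoc ..).symm
  have := hv.dist_le_one hva' hvb'
  rw [dist_comm (u := a), dist_comm (u := a)] at *
  omega

lemma IsHullSet.mem_of_isSimplicial (hG : G.Preconnected) {S : Set V} (hS : IsHullSet G S)
    {v : V} (hv : IsSimplicial G v) : v ∈ S := by
  by_contra hvS
  have := geoHull_subset (hv.isGeoConvex_compl hG) (Set.subset_compl_singleton_iff.mpr hvS)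
  rw [hS] at this
  exact this (Set.mem_univ v) rfl

/-- Such an `S` is contained in every hull set. -/
lemma hullNumber_eq_ncard_of_forall_isSimplicial [Finite V] (hG : G.Preconnected) {S : Set V}
    (hS : IsHullSet G S) (hsimp : ∀ v ∈ S, IsSimplicial G v) : hullNumber G = S.ncard := by
  refine le_antisymm (Nat.sInf_le ⟨S, rfl, hS⟩) (le_csInf ⟨_, S, rfl, hS⟩ ?_)
  rintro _ ⟨T, rfl, hT⟩
  exact Set.ncard_le_ncard fun v hv => hT.mem_of_isSimplicial hG (hsimp v hv)

end Geodetic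

section CompPrism

variable (G)

lemma compPrism_reachable_inl_inr (u : V) : (compPrism G).Reachable (.inl u) (.inr u) :=
  Adj.reachable (show u = u from rfl)

/-- `compPrism G` is connected because `G` or `Gᶜ` is. -/
lemma compPrism_preconnected : (compPrism G).Preconnected := by
  let f : G →g compPrism G := ⟨Sum.inl, id⟩
  let g : Gᶜ →g compPrism G := ⟨Sum.inr, fun h => (compl_adj G _ _).mp h⟩
  have hl := compPrism_reachable_inl_inr G
  rcases G.connected_or_preconnected_compl with hG | hGc
  · have key : ∀ x u, (compPrism G).Reachable x (.inl u) := by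
      rintro (w | w) u
      · exact (hG w u).map f
      · exact (hl w).symm.trans ((hG w u).map f)
    exact fun x y => (key x (x.elim id id)).trans (key y _).symm
  · have key : ∀ x u, (compPrism G).Reachable x (.inr u) := by
      rintro (w | w) u
      · exact (hl w).trans ((hGc w u).map g)
      · exact (hGc w u).map g
    exact fun x y => (key x (x.elim id id)).trans (key y _).symm

lemma compPrism_neighborSet_inr {u : V} (hu : ∀ w, w ≠ u → G.Adj u w) :
    (compPrism G).neighborSet (.inr u) = {.inl u} := by
  ext (w | w)
  · simp [compPrism, eq_comm]
  · simpa [compPrism] using fun hne => hu w (Ne.symm hne)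

/-- The pendant vertex `inr u` and any other `inr v` span a geodesic through `inl u`. -/
lemma isHullSet_compPrism_top_range_inr [Nontrivial V] :
    IsHullSet (compPrism (⊤ : SimpleGraph V)) (Set.range Sum.inr) := by
  refine Set.eq_univ_of_forall ?_
  rintro (u | u)
  · obtain ⟨v, hvu⟩ := exists_ne u
    have hpend := compPrism_neighborSet_inr ⊤ (u := u) fun _ hw => hw.symm
    exact isGeoConvex_geoHull _ (.inr u) (subset_geoHull _ (Set.mem_range_self u)) (.inr v)
      (subset_geoHull _ (Set.mem_range_self v))
      (mem_geoInterval_of_neighborSet_eq_singleton hpend (compPrism_preconnected ⊤ _ _)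
        (by simpa using hvu))
  · exact subset_geoHull _ (Set.mem_range_self u)

end CompPrism

end SimpleGraph

theorem hullNumber_compPrism_complete (n : ℕ) (hn : 2 ≤ n) :
    hullNumber (compPrism (⊤ : SimpleGraph (Fin n))) = n := by
  have : Nontrivial (Fin n) := Fin.nontrivial_iff_two_le.mpr hn
  rw [hullNumber_eq_ncard_of_forall_isSimplicial (compPrism_preconnected ⊤)
      isHullSet_compPrism_top_range_inr, Set.ncard_range_of_injective Sum.inr_injective,
    Nat.card_eq_fintype_card, Fintype.card_fin]
  rintro _ ⟨u, rfl⟩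
  exact isSimplicial_of_neighborSet_eq_singleton
    (compPrism_neighborSet_inr ⊤ fun _ hw => hw.symm)
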